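/- Let k be an algebraically closed field of characteristic 0, let α, β ∈ k with β ≠ 0, let n ≥ 2, and let L₂ be the (n+2)×(n+2) matrix over k whose rows 1 through n are given by row i having entry 1 in column i, −α in column i+1, and −β in column i+2 (and 0 elsewhere); whose row n+1 has entry −α in column 1, −β in column 2, b_{n+1} in column n+1, −(β b_n + α b_{n+1}) in column n+2, and 0 elsewhere; and whose row n+2 has entry 1 in column 1, a_{n+1} in column n+1, −(β a_n + α a_{n+1}) in column n+2, and 0 elsewhere; here a_i, b_i ∈ k are defined by (a_i, b_i)ᵀ = M^{i−1}(1,0)ᵀ with M the 2×2 matrix with rows (α, 1) and (β, 0). If δ_n := (1 0) M^n (1,0)ᵀ ≠ 0 and α² + 4β ≠ 0, then rank L₂ = n + 2, i.e. L₂ is invertible. -/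
import Mathlib


open Matrix

/-- `a_i` defined by `(a_i, b_i)ᵀ = M^(i−1) (1,0)ᵀ` for `M = !![α, 1; β, 0]`. -/
noncomputable def duA {k : Type*} [Field k] (α β : k) (i : ℕ) : k :=
  ((!![α, 1; β, 0] : Matrix (Fin 2) (Fin 2) k) ^ (i - 1)).mulVec ![1, 0] 0

/-- `b_i` defined by `(a_i, b_i)ᵀ = M^(i−1) (1,0)ᵀ` for `M = !![α, 1; β, 0]`. -/
noncomputable def duB {k : Type*} [Field k] (α β : k) (i : ℕ) : k :=
  ((!![α, 1; β, 0] : Matrix (Fin 2) (Fin 2) k) ^ (i - 1)).mulVec ![1, 0] 1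

/-- The `(n+2) × (n+2)` matrix `L₂` (rows and columns indexed from `0`):
for `0 ≤ i < n`, row `i` has `1` in column `i`, `−α` in column `i+1`, `−β` in column `i+2`;
row `n` has `−α` in column `0`, `−β` in column `1`, `b_{n+1}` in column `n`,
`−(β b_n + α b_{n+1})` in column `n+1`;
row `n+1` has `1` in column `0`, `a_{n+1}` in column `n`, `−(β a_n + α a_{n+1})` in
column `n+1`; all other entries are `0`. -/
noncomputable def L₂ {k : Type*} [Field k] (α β : k) (n : ℕ) :
    Matrix (Fin (n + 2)) (Fin (n + 2)) k :=
  fun i j =>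
    if (i : ℕ) < n then
      (if (j : ℕ) = (i : ℕ) then (1 : k) else 0) +
      (if (j : ℕ) = (i : ℕ) + 1 then -α else 0) +
      (if (j : ℕ) = (i : ℕ) + 2 then -β else 0)
    else if (i : ℕ) = n then
      (if (j : ℕ) = 0 then -α else 0) + (if (j : ℕ) = 1 then -β else 0) +
      (if (j : ℕ) = n then duB α β (n + 1) else 0) +
      (if (j : ℕ) = n + 1 then -(β * duB α β n + α * duB α β (n + 1)) else 0)
    else
      (if (j : ℕ) = 0 then (1 : k) else 0) +
      (if (j : ℕ) = n then duA α β (n + 1) else 0) +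
      (if (j : ℕ) = n + 1 then -(β * duA α β n + α * duA α β (n + 1)) else 0)

section Aux
variable {k : Type*} [Field k] (α β : k)

lemma duA_one : duA α β 1 = 1 := by simp [duA]
lemma duB_one : duB α β 1 = 0 := by simp [duB]
lemma duA_succ (i : ℕ) (hi : 1 ≤ i) :
    duA α β (i + 1) = α * duA α β i + duB α β i := by
  obtain ⟨j, rfl⟩ := Nat.exists_eq_add_of_le hi
  simp only [duA, duB, Nat.add_sub_cancel_left, Nat.add_sub_cancel]
  rw [show 1 + j = j + 1 by omega, pow_succ', ← Matrix.mulVec_mulVec]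
  simp [Matrix.mulVec, dotProduct, Fin.sum_univ_two]
lemma duB_succ (i : ℕ) (hi : 1 ≤ i) :
    duB α β (i + 1) = β * duA α β i := by
  obtain ⟨j, rfl⟩ := Nat.exists_eq_add_of_le hi
  simp only [duA, duB, Nat.add_sub_cancel_left, Nat.add_sub_cancel]
  rw [show 1 + j = j + 1 by omega, pow_succ', ← Matrix.mulVec_mulVec]
  simp [Matrix.mulVec, dotProduct, Fin.sum_univ_two]
lemma duA_delta (n : ℕ) :
    duA α β (n + 1) = ((!![α, 1; β, 0] : Matrix (Fin 2) (Fin 2) k) ^ n) 0 0 := by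
  simp [duA, Matrix.mulVec, dotProduct, Fin.sum_univ_two]
lemma sum_if_mul {m : ℕ} (c : ℕ) (h : c < m) (t : k) (x : Fin m → k) :
    ∑ j : Fin m, (if (j : ℕ) = c then t else 0) * x j = t * x ⟨c, h⟩ := by
  rw [Finset.sum_eq_single (⟨c, h⟩ : Fin m)]
  · simp
  · intro b _ hb
    rw [if_neg (fun hc => hb (Fin.ext hc)), zero_mul]
  · simp

lemma ker_L₂ [CharZero k] (hβ : β ≠ 0) (n : ℕ) (hn : 2 ≤ n)
    (ha : duA α β (n + 1) ≠ 0) (hdisc : α ^ 2 + 4 * β ≠ 0)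
    (x : Fin (n + 2) → k) (hx : (L₂ α β n).mulVec x = 0) : x = 0 := by
  have hrow : ∀ i i1 i2 : Fin (n + 2), (i : ℕ) < n → (i1 : ℕ) = (i : ℕ) + 1 →
      (i2 : ℕ) = (i : ℕ) + 2 → x i = α * x i1 + β * x i2 := by
    intro i i1 i2 hi h1 h2
    have h0 := congrFun hx i
    rw [Matrix.mulVec, Pi.zero_apply] at h0
    simp only [dotProduct] at h0
    have hL : ∀ j : Fin (n + 2), L₂ α β n i j =
        (if (j : ℕ) = (i : ℕ) then (1 : k) else 0) +
        (if (j : ℕ) = (i : ℕ) + 1 then -α else 0) +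
        (if (j : ℕ) = (i : ℕ) + 2 then -β else 0) := fun j => by
      simp only [L₂, if_pos hi]
    simp only [hL, add_mul] at h0
    rw [Finset.sum_add_distrib, Finset.sum_add_distrib,
      sum_if_mul (i : ℕ) (by omega) 1 x, sum_if_mul ((i : ℕ) + 1) (by omega) (-α) x,
      sum_if_mul ((i : ℕ) + 2) (by omega) (-β) x] at h0
    have e1 : x i1 = x ⟨(i : ℕ) + 1, by omega⟩ := congrArg x (Fin.ext h1)
    have e2 : x i2 = x ⟨(i : ℕ) + 2, by omega⟩ := congrArg x (Fin.ext h2)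
    rw [e1, e2]
    linear_combination h0
  have claim : ∀ j, j ≤ n → ∀ i : Fin (n + 2), (i : ℕ) = n - j →
      x i = duA α β (j + 1) * x ⟨n, by omega⟩ + duB α β (j + 1) * x ⟨n + 1, by omega⟩ := by
    intro j
    induction j using Nat.strong_induction_on with
    | _ j ih =>
      match j, ih with
      | 0, _ =>
        intro _ i hi
        rw [show i = ⟨n, by omega⟩ from Fin.ext (show (i : ℕ) = n by omega), duA_one, duB_one]
        ring
      | 1, _ =>
        intro _ i hi
        have hr := hrow i ⟨n, by omega⟩ ⟨n + 1, by omega⟩ (by omega)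
          (by show n = (i : ℕ) + 1; omega) (by show n + 1 = (i : ℕ) + 2; omega)
        rw [hr, duA_succ α β 1 le_rfl, duB_succ α β 1 le_rfl, duA_one, duB_one]
        ring
      | (m + 2), ih =>
        intro hj i hi
        have h1 := ih (m + 1) (by omega) (by omega) ⟨n - (m + 1), by omega⟩ rfl
        have h0 := ih m (by omega) (by omega) ⟨n - m, by omega⟩ rfl
        have hr := hrow i ⟨n - (m + 1), by omega⟩ ⟨n - m, by omega⟩ (by omega)
          (by show n - (m + 1) = (i : ℕ) + 1; omega) (by show n - m = (i : ℕ) + 2; omega)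
        rw [hr, h1, h0, duA_succ α β (m + 2) (by omega), duB_succ α β (m + 2) (by omega),
          duA_succ α β (m + 1) (by omega), duB_succ α β (m + 1) (by omega)]
        ring
  -- row n equation
  have hn0 := congrFun hx ⟨n, by omega⟩
  rw [Matrix.mulVec, Pi.zero_apply] at hn0
  simp only [dotProduct] at hn0
  have hLn : ∀ j : Fin (n + 2), L₂ α β n ⟨n, by omega⟩ j =
      (if (j : ℕ) = 0 then -α else 0) + (if (j : ℕ) = 1 then -β else 0) +
      (if (j : ℕ) = n then duB α β (n + 1) else 0) +
      (if (j : ℕ) = n + 1 then -(β * duB α β n + α * duB α β (n + 1)) else 0) := fun j => by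
    simp only [L₂, lt_self_iff_false, if_false, if_true]
  simp only [hLn, add_mul] at hn0
  rw [Finset.sum_add_distrib, Finset.sum_add_distrib, Finset.sum_add_distrib,
    sum_if_mul 0 (by omega) (-α) x, sum_if_mul 1 (by omega) (-β) x,
    sum_if_mul n (by omega) (duB α β (n + 1)) x,
    sum_if_mul (n + 1) (by omega) (-(β * duB α β n + α * duB α β (n + 1))) x] at hn0
  -- row n+1 equation
  have hm0 := congrFun hx ⟨n + 1, by omega⟩
  rw [Matrix.mulVec, Pi.zero_apply] at hm0
  simp only [dotProduct] at hm0
  have hLm : ∀ j : Fin (n + 2), L₂ α β n ⟨n + 1, by omega⟩ j =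
      (if (j : ℕ) = 0 then (1 : k) else 0) +
      (if (j : ℕ) = n then duA α β (n + 1) else 0) +
      (if (j : ℕ) = n + 1 then -(β * duA α β n + α * duA α β (n + 1)) else 0) := fun j => by
    simp only [L₂]
    rw [if_neg (show ¬ (n + 1) < n by omega), if_neg (show ¬ (n + 1) = n by omega)]
  simp only [hLm, add_mul] at hm0
  rw [Finset.sum_add_distrib, Finset.sum_add_distrib,
    sum_if_mul 0 (by omega) 1 x, sum_if_mul n (by omega) (duA α β (n + 1)) x,
    sum_if_mul (n + 1) (by omega) (-(β * duA α β n + α * duA α β (n + 1))) x] at hm0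
  -- values of x 0 and x 1
  have hx0 : x ⟨0, by omega⟩ = duA α β (n + 1) * x ⟨n, by omega⟩ +
      duB α β (n + 1) * x ⟨n + 1, by omega⟩ := by
    exact claim n le_rfl ⟨0, by omega⟩ (by show 0 = n - n; omega)
  have hx1 : x ⟨1, by omega⟩ = duA α β n * x ⟨n, by omega⟩ +
      duB α β n * x ⟨n + 1, by omega⟩ := by
    have := claim (n - 1) (by omega) ⟨1, by omega⟩ (by show 1 = n - (n - 1); omega)
    rwa [show n - 1 + 1 = n from by omega] at this
  have hr1 : duB α β (n + 1) = β * duA α β n := duB_succ α β n (by omega)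
  have hr2 : duA α β (n + 1) = α * duA α β n + duB α β n := duA_succ α β n (by omega)
  rw [hx0, hx1] at hn0
  rw [hx0] at hm0
  have q1 : α * x ⟨n, by omega⟩ + 2 * β * x ⟨n + 1, by omega⟩ = 0 := by
    have e1 : duA α β (n + 1) * (α * x ⟨n, by omega⟩ + 2 * β * x ⟨n + 1, by omega⟩) = 0 := by
      linear_combination (-1 : k) * hn0 +
        (x ⟨n, by omega⟩ - 2 * α * x ⟨n + 1, by omega⟩) * hr1 +
        2 * β * x ⟨n + 1, by omega⟩ * hr2
    exact (mul_eq_zero.mp e1).resolve_left ha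
  have q2 : 2 * x ⟨n, by omega⟩ - α * x ⟨n + 1, by omega⟩ = 0 := by
    have e2 : duA α β (n + 1) * (2 * x ⟨n, by omega⟩ - α * x ⟨n + 1, by omega⟩) = 0 := by
      linear_combination hm0 - x ⟨n + 1, by omega⟩ * hr1
    exact (mul_eq_zero.mp e2).resolve_left ha
  have hY : x ⟨n + 1, by omega⟩ = 0 := by
    have h3 : (α ^ 2 + 4 * β) * x ⟨n + 1, by omega⟩ = 0 := by
      linear_combination 2 * q1 - α * q2
    exact (mul_eq_zero.mp h3).resolve_left hdisc
  have hX : x ⟨n, by omega⟩ = 0 := by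
    have h4 : (2 : k) * x ⟨n, by omega⟩ = 0 := by linear_combination q2 + α * hY
    exact (mul_eq_zero.mp h4).resolve_left two_ne_zero
  funext i
  rcases Nat.lt_or_ge (i : ℕ) (n + 1) with h | h
  · have := claim (n - (i : ℕ)) (by omega) i (by omega)
    rw [this, hX, hY]
    simp
  · rw [show i = ⟨n + 1, by omega⟩ from Fin.ext (show (i : ℕ) = n + 1 by omega), hY]
    rfl

end Aux

/-- If `δ_n = (1 0) M^n (1,0)ᵀ ≠ 0` and `α² + 4β ≠ 0`, then `rank L₂ = n + 2`, i.e. `L₂` is invertible. -/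
theorem rank_L2_of_delta_ne_zero_of_disc_ne_zero {k : Type*} [Field k] [IsAlgClosed k] [CharZero k]
    (α β : k) (hβ : β ≠ 0) (n : ℕ) (hn : 2 ≤ n)
    (hδ : ((!![α, 1; β, 0] : Matrix (Fin 2) (Fin 2) k) ^ n) 0 0 ≠ 0)
    (hdisc : α ^ 2 + 4 * β ≠ 0) :
    (L₂ α β n).rank = n + 2 ∧ IsUnit (L₂ α β n) := by
  have ha : duA α β (n + 1) ≠ 0 := by rw [duA_delta]; exact hδ
  have hinj : Function.Injective ((L₂ α β n).mulVec) := by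
    intro v w h
    have h2 : (L₂ α β n).mulVec (v - w) = 0 := by
      rw [Matrix.mulVec_sub, h, sub_self]
    exact sub_eq_zero.mp (ker_L₂ α β hβ n hn ha hdisc (v - w) h2)
  have hu : IsUnit (L₂ α β n) := Matrix.mulVec_injective_iff_isUnit.mp hinj
  exact ⟨by rw [Matrix.rank_of_isUnit _ hu, Fintype.card_fin], hu⟩
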